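/- Let M be an irreducible n×n matrix with nonnegative integer entries, n ≥ 2, such that some column of M has sum at least 2 (i.e., M is not a permutation matrix). Then the Perron–Frobenius eigenvalue λ of M satisfies λ^n ≥ 2, in particular λ > 1. -/

import Mathlib

open Matrix

/-- The spectral radius of a real square matrix: the supremum of the absolute
values of its complex eigenvalues. -/
noncomputable def specRad {m : Type*} [Fintype m] [DecidableEq m] (M : Matrix m m ℝ) : ℝ :=
  sSup ((fun z : ℂ => ‖z‖) '' spectrum ℂ (M.map Complex.ofReal))

/-- A nonnegative square matrix is irreducible if for every pair of indices `(i,j)`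
some power of the matrix has positive `(i,j)` entry. -/
def MatIrreducible {m : Type*} [Fintype m] [DecidableEq m] (M : Matrix m m ℕ) : Prop :=
  ∀ i j, ∃ N : ℕ, 0 < N ∧ 0 < (M ^ N) i j

/-!
Fix a column `j` with `∑ i, M i j ≥ 2`. By irreducibility every `i` is reached from `j` by a
walk of length `ℓ < n`, so the column sum of `M ^ k` at `i` dominates that of `M ^ (k - ℓ)`
at `j`. The column sum of `M ^ (k + 1)` at `j` is the `M i j`-weighted sum of the column sums
of `M ^ k` at the various `i`, so it at least doubles every `n` steps and is `≥ 2 ^ m` at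
`k = n m`. Entries are bounded by the operator norm, so `‖(M ^ n) ^ m‖ ≥ 2 ^ m / n`, and
Gelfand's formula makes the spectral radius of `M ^ n` at least `2`. By spectral mapping it is
attained at `z ^ n` for an eigenvalue `z` of `M`, whence `|z| ^ n ≥ 2`.
-/

open Finset Filter Topology
open scoped NNReal ENNReal

attribute [local instance] Matrix.linftyOpSeminormedAddCommGroup Matrix.linftyOpNormedRing
  Matrix.linftyOpNormedAlgebra

namespace Matrix

variable {ι : Type*} [Fintype ι] [DecidableEq ι] (M : Matrix ι ι ℕ)

theorem pow_apply_mul_pow_apply_le (a b : ℕ) (i k j : ι) :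
    (M ^ a) i k * (M ^ b) k j ≤ (M ^ (a + b)) i j := by
  rw [pow_add, mul_apply]
  exact single_le_sum (f := fun k => (M ^ a) i k * (M ^ b) k j) (by simp) (mem_univ k)

theorem exists_pos_pow_apply_and_pos_of_pow_add_apply_pos {a b : ℕ} {i j : ι}
    (h : 0 < (M ^ (a + b)) i j) : ∃ k, 0 < (M ^ a) i k ∧ 0 < (M ^ b) k j := by
  rw [pow_add, mul_apply, sum_pos_iff] at h
  obtain ⟨k, -, hk⟩ := h
  exact ⟨k, CanonicallyOrderedAdd.mul_pos.mp hk⟩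

theorem exists_lt_card_pos_pow_apply {N : ℕ} {i j : ι} (h : 0 < (M ^ N) i j) :
    ∃ ℓ < Fintype.card ι, 0 < (M ^ ℓ) i j := by
  have hex : ∃ ℓ, 0 < (M ^ ℓ) i j := ⟨N, h⟩
  refine ⟨Nat.find hex, ?_, Nat.find_spec hex⟩
  set L := Nat.find hex
  -- `w m` is the vertex at time `m` of a shortest walk from `i` to `j`; a repetition
  -- `w s = w t` with `s < t` would give a walk of length `L - (t - s) < L`.
  have hsplit : ∀ m : Fin (L + 1), ∃ k, 0 < (M ^ (m : ℕ)) i k ∧ 0 < (M ^ (L - m)) k j :=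
    fun m => M.exists_pos_pow_apply_and_pos_of_pow_add_apply_pos <| by
      rw [Nat.add_sub_cancel' (Nat.lt_succ_iff.mp m.isLt)]
      exact Nat.find_spec hex
  choose w hw using hsplit
  have hw_inj : Function.Injective w := by
    intro s t hst
    by_contra hne
    wlog hlt : s < t generalizing s t
    · exact this hst.symm (Ne.symm hne) ((not_lt.mp hlt).lt_of_ne (Ne.symm hne))
    have hshort : 0 < (M ^ ((s : ℕ) + (L - t))) i j :=
      (Nat.mul_pos (hw s).1 (hst ▸ (hw t).2)).trans_le (M.pow_apply_mul_pow_apply_le _ _ _ _ _)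
    have hL_le := Nat.find_min' hex hshort
    have hst_lt : (s : ℕ) < t := hlt
    omega
  simpa using Fintype.card_le_of_injective w hw_inj

theorem sum_pow_succ_apply (k : ℕ) (j : ι) :
    ∑ a, (M ^ (k + 1)) a j = ∑ i, (∑ a, (M ^ k) a i) * M i j := by
  simp_rw [pow_succ, mul_apply, sum_mul]
  exact sum_comm

theorem sum_pow_apply_mul_le (k ℓ : ℕ) (i j : ι) :
    (∑ a, (M ^ k) a i) * (M ^ ℓ) i j ≤ ∑ a, (M ^ (k + ℓ)) a j := by
  rw [sum_mul]
  exact sum_le_sum fun a _ => M.pow_apply_mul_pow_apply_le k ℓ a i j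

theorem sum_pow_apply_le_sum_pow_add_apply {ℓ : ℕ} {i j : ι} (h : 0 < (M ^ ℓ) i j)
    (k : ℕ) :
    ∑ a, (M ^ k) a i ≤ ∑ a, (M ^ (k + ℓ)) a j :=
  (Nat.le_mul_of_pos_right _ h).trans (M.sum_pow_apply_mul_le k ℓ i j)

theorem one_le_sum_pow_apply (hM : ∀ j, ∃ i, 0 < M i j) (k : ℕ) (j : ι) :
    1 ≤ ∑ a, (M ^ k) a j := by
  induction k generalizing j with
  | zero => simp [one_apply]
  | succ k ih =>
    obtain ⟨i, hi⟩ := hM j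
    calc 1 ≤ (∑ a, (M ^ k) a i) * (M ^ 1) i j := by rw [pow_one]; exact Nat.mul_pos (ih i) hi
      _ ≤ ∑ a, (M ^ (k + 1)) a j := M.sum_pow_apply_mul_le k 1 i j

theorem nnnorm_entry_le_linfty_opNNNorm {m n α : Type*} [Fintype m] [Fintype n]
    [SeminormedAddCommGroup α] (B : Matrix m n α) (i : m) (j : n) :
    ‖B i j‖₊ ≤ ‖B‖₊ := by
  rw [linfty_opNNNorm_def]
  exact (single_le_sum (f := fun j => ‖B i j‖₊) (fun _ _ => zero_le) (mem_univ j)).trans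
    (le_sup (f := fun i => ∑ j, ‖B i j‖₊) (mem_univ i))

end Matrix

theorem ENNReal.tendsto_coe_rpow_one_div_nhds_one {C : ℝ≥0} (hC : C ≠ 0) :
    Tendsto (fun m : ℕ => (C : ℝ≥0∞) ^ (1 / m : ℝ)) atTop (𝓝 1) := by
  have hexp : Tendsto (fun m : ℕ => (1 / m : ℝ)) atTop (𝓝 0) :=
    tendsto_one_div_atTop_nhds_zero_nat
  have hlim := (NNReal.continuousAt_rpow (Or.inl hC)).tendsto.comp
    (tendsto_const_nhds.prodMk_nhds hexp)
  rw [NNReal.rpow_zero] at hlim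
  refine (ENNReal.tendsto_coe.mpr hlim).congr' ?_
  filter_upwards with m
  simp [ENNReal.coe_rpow_of_nonneg]

theorem spectrum.le_spectralRadius_of_pow_le_mul_nnnorm_pow {A : Type*} [NormedRing A]
    [NormedAlgebra ℂ A] [CompleteSpace A] (a : A) {c C : ℝ≥0}
    (h : ∀ m, c ^ m ≤ C * ‖a ^ m‖₊) : (c : ℝ≥0∞) ≤ spectralRadius ℂ a := by
  -- `C + 1` rather than `C`, whose `m`-th roots need not tend to `1`
  have hlim := ENNReal.Tendsto.mul (ENNReal.tendsto_coe_rpow_one_div_nhds_one (C := C + 1)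
    (by positivity)) (Or.inl one_ne_zero) (pow_nnnorm_pow_one_div_tendsto_nhds_spectralRadius a)
    (Or.inr ENNReal.one_ne_top)
  rw [one_mul] at hlim
  refine ge_of_tendsto hlim ?_
  filter_upwards [eventually_ne_atTop 0] with m hm
  have hcm : ((c ^ m : ℝ≥0) : ℝ≥0∞) ≤ ((C + 1 : ℝ≥0) : ℝ≥0∞) * ‖a ^ m‖₊ := by
    rw [← ENNReal.coe_mul, ENNReal.coe_le_coe]
    exact (h m).trans (mul_le_mul_of_nonneg_right le_self_add zero_le)
  calc (c : ℝ≥0∞) = ((c : ℝ≥0∞) ^ m) ^ (1 / m : ℝ) := by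
        rw [one_div, ENNReal.pow_rpow_inv_natCast hm]
    _ ≤ (((C + 1 : ℝ≥0) : ℝ≥0∞) * ‖a ^ m‖₊) ^ (1 / m : ℝ) :=
        ENNReal.rpow_le_rpow (by exact_mod_cast hcm) (by positivity)
    _ = _ := ENNReal.mul_rpow_of_nonneg _ _ (by positivity)

theorem norm_le_specRad_of_mem_spectrum {m : Type*} [Fintype m] [DecidableEq m]
    {X : Matrix m m ℝ} {z : ℂ} (hz : z ∈ spectrum ℂ (X.map Complex.ofReal)) :
    ‖z‖ ≤ specRad X :=
  le_csSup ((X.map Complex.ofReal).finite_spectrum.image _).bddAbove ⟨z, hz, rfl⟩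

namespace MatIrreducible

variable {ι : Type*} [Fintype ι] [DecidableEq ι] {M : Matrix ι ι ℕ}

theorem exists_pos_apply (hM : MatIrreducible M) (j : ι) : ∃ i, 0 < M i j := by
  obtain ⟨N, hN, hpos⟩ := hM j j
  obtain ⟨N, rfl⟩ := Nat.exists_eq_add_one_of_ne_zero hN.ne'
  obtain ⟨i, -, hi⟩ := M.exists_pos_pow_apply_and_pos_of_pow_add_apply_pos hpos
  exact ⟨i, by simpa using hi⟩

theorem exists_lt_card_pos_pow_apply (hM : MatIrreducible M) (i j : ι) :
    ∃ ℓ < Fintype.card ι, 0 < (M ^ ℓ) i j :=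
  let ⟨_, _, hN⟩ := hM i j
  M.exists_lt_card_pos_pow_apply hN

theorem two_pow_le_sum_pow_apply (hM : MatIrreducible M) {j : ι} (hj : 2 ≤ ∑ i, M i j)
    (m : ℕ) {k : ℕ} (hk : Fintype.card ι * m ≤ k) : 2 ^ m ≤ ∑ a, (M ^ k) a j := by
  induction m generalizing k with
  | zero => exact M.one_le_sum_pow_apply hM.exists_pos_apply k j
  | succ m ih =>
    have hcard : 0 < Fintype.card ι := Fintype.card_pos_iff.mpr ⟨j⟩
    rw [Nat.mul_succ] at hk
    obtain ⟨k, rfl⟩ := Nat.exists_eq_add_one_of_ne_zero (by omega : k ≠ 0)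
    have hstep : ∀ i, 2 ^ m * M i j ≤ (∑ a, (M ^ k) a i) * M i j := by
      intro i
      refine Nat.mul_le_mul_right _ ?_
      obtain ⟨ℓ, hℓ, hpos⟩ := hM.exists_lt_card_pos_pow_apply j i
      calc 2 ^ m ≤ ∑ a, (M ^ (k - ℓ)) a j := ih (by omega)
        _ ≤ ∑ a, (M ^ (k - ℓ + ℓ)) a i := M.sum_pow_apply_le_sum_pow_add_apply hpos _
        _ = ∑ a, (M ^ k) a i := by rw [Nat.sub_add_cancel (by omega)]
    calc 2 ^ (m + 1) = 2 ^ m * 2 := pow_succ 2 m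
      _ ≤ ∑ i, 2 ^ m * M i j := by rw [← mul_sum]; exact Nat.mul_le_mul_left _ hj
      _ ≤ ∑ i, (∑ a, (M ^ k) a i) * M i j := sum_le_sum fun i _ => hstep i
      _ = ∑ a, (M ^ (k + 1)) a j := (M.sum_pow_succ_apply k j).symm

theorem exists_mem_spectrum_two_le_nnnorm_pow (hM : MatIrreducible M) {j : ι}
    (hj : 2 ≤ ∑ i, M i j) :
    ∃ z ∈ spectrum ℂ (M.map (Nat.cast : ℕ → ℂ)), 2 ≤ ‖z‖₊ ^ Fintype.card ι := by
  set n := Fintype.card ι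
  set A := M.map (Nat.cast : ℕ → ℂ)
  have : Nonempty ι := ⟨j⟩
  have hentry : ∀ k a, ((M ^ k) a j : ℝ≥0) ≤ ‖A ^ k‖₊ := by
    intro k a
    have hA_pow : A ^ k = (M ^ k).map (Nat.castRingHom ℂ) :=
      (M.map_pow (Nat.castRingHom ℂ) k).symm
    simpa [hA_pow] using ((M ^ k).map (Nat.castRingHom ℂ)).nnnorm_entry_le_linfty_opNNNorm a j
  have hgrowth : ∀ m, (2 : ℝ≥0) ^ m ≤ n * ‖(A ^ n) ^ m‖₊ := by
    intro m
    calc (2 : ℝ≥0) ^ m ≤ ∑ a, ((M ^ (n * m)) a j : ℝ≥0) := by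
          exact_mod_cast hM.two_pow_le_sum_pow_apply hj m le_rfl
      _ ≤ ∑ _a : ι, ‖(A ^ n) ^ m‖₊ := sum_le_sum fun a _ => pow_mul A n m ▸ hentry _ a
      _ = n * ‖(A ^ n) ^ m‖₊ := by simp [n]
  obtain ⟨z, hz, hz_eq⟩ := spectrum.exists_nnnorm_eq_spectralRadius (A ^ n)
  rw [spectrum.map_pow_of_pos A Fintype.card_pos] at hz
  obtain ⟨w, hw, rfl⟩ := hz
  refine ⟨w, hw, ?_⟩
  have h2 := (spectrum.le_spectralRadius_of_pow_le_mul_nnnorm_pow _ hgrowth).trans_eq hz_eq.symm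
  rw [← nnnorm_pow]
  exact_mod_cast h2

end MatIrreducible

theorem perron_frobenius_eigenvalue_gt_one_general
    {n : ℕ} (M : Matrix (Fin n) (Fin n) ℕ)
    (hirr : MatIrreducible M)
    (hcol : ∃ j, 2 ≤ ∑ i, M i j) :
    2 ≤ specRad (M.map (Nat.cast : ℕ → ℝ)) ^ n
    ∧ 1 < specRad (M.map (Nat.cast : ℕ → ℝ)) := by
  obtain ⟨j, hj⟩ := hcol
  obtain ⟨z, hz, hz_two⟩ := hirr.exists_mem_spectrum_two_le_nnnorm_pow hj
  rw [Fintype.card_fin] at hz_two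
  have hz_le : ‖z‖ ≤ specRad (M.map (Nat.cast : ℕ → ℝ)) :=
    norm_le_specRad_of_mem_spectrum (by rwa [Matrix.map_map])
  have hpow : 2 ≤ specRad (M.map (Nat.cast : ℕ → ℝ)) ^ n :=
    calc (2 : ℝ) ≤ ‖z‖ ^ n := by exact_mod_cast hz_two
      _ ≤ _ := pow_le_pow_left₀ (norm_nonneg z) hz_le n
  refine ⟨hpow, lt_of_pow_lt_pow_left₀ n ((norm_nonneg z).trans hz_le) ?_⟩
  rw [one_pow]
  linarith

/-- An irreducible nonnegative integer matrix of size `n ≥ 2` with some column sum at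
least `2` has Perron–Frobenius eigenvalue `λ` with `λ^n ≥ 2`; in particular `λ > 1`. -/
theorem perron_frobenius_eigenvalue_gt_one
    {n : ℕ} (hn : 2 ≤ n) (M : Matrix (Fin n) (Fin n) ℕ)
    (hirr : MatIrreducible M)
    (hcol : ∃ j, 2 ≤ ∑ i, M i j) :
    2 ≤ specRad (M.map (Nat.cast : ℕ → ℝ)) ^ n
    ∧ 1 < specRad (M.map (Nat.cast : ℕ → ℝ)) :=
  perron_frobenius_eigenvalue_gt_one_general M hirr hcol
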